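/- arXiv:0909.1727 — 6 statements merged into one kernel-verified Lean document; each statement's English description precedes it below -/
import Mathlib

section
/- Let d ≥ 3 and consider in affine coordinates (x₁,x₂,x₃) the surface germ at the origin defined by f = x₂·(x₃·l₃(x₁,x₂,x₃) + x₂·l₂(x₁,x₂) + x₁·l₁(x₁)) + x₃^d = 0, where l₁, l₂, l₃ are polynomials with l₁(0) ≠ 0. Then there is a formal (or analytic) change of local coordinates at the origin after which f becomes z₁² + z₂² + z₃^d; i.e., the origin is an A_{d−1}-singularity. -/
/-!
Put `L = x₃ l₃ + x₂ l₂ + x₁ l₁`, so that `f = x₂ L + x₃ ^ d`, and let `ℓ = a x₁ + b x₂ + c x₃` be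
the linear part of `L`, where `a = l₁(0) ≠ 0`. Over `ℂ` the linear change of coordinates
`z₁ = (ℓ + x₂) / 2`, `z₂ = i (ℓ - x₂) / 2`, `z₃ = x₃` turns `z₁² + z₂² + z₃ ^ d` into
`x₂ ℓ + x₃ ^ d`, and the substitution `x₁ ↦ x₁ + (L - ℓ) / a` turns this into `f`.

The latter substitution is tangent to the identity. Any such substitution fixes the
lowest-degree homogeneous part of every power series, so it strictly raises the order of
`g - subst g`; this makes it injective, and surjective by successive approximation
`f ↦ f + (g - subst f)`, which converges coefficientwise.
-/

open MvPolynomial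

/-- A surface germ at the origin of `ℂ³` has a singularity of type `A_k` if its equation can be
brought, by a formal change of local coordinates (an algebra automorphism of `ℂ[[z₁,z₂,z₃]]`),
to the normal form `z₁² + z₂² + z₃^{k+1}`. -/
def IsAkSingularityAtOrigin (f : MvPowerSeries (Fin 3) ℂ) (k : ℕ) : Prop :=
  ∃ φ : MvPowerSeries (Fin 3) ℂ ≃ₐ[ℂ] MvPowerSeries (Fin 3) ℂ,
    φ f = (MvPowerSeries.X 0) ^ 2 + (MvPowerSeries.X 1) ^ 2 + (MvPowerSeries.X 2) ^ (k + 1)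

namespace MvPowerSeries

variable {σ R : Type*} [CommRing R]

theorem le_order_mul_sub_mul {x x' y y' : MvPowerSeries σ R} {p q : ℕ∞}
    (hx : p + 1 ≤ (x - x').order) (hx' : p ≤ x'.order)
    (hy : q + 1 ≤ (y - y').order) (hy' : q ≤ y'.order) :
    p + q + 1 ≤ (x * y - x' * y').order := by
  have hy₀ : q ≤ y.order := by
    simpa using (le_min (le_self_add.trans hy) hy').trans
      (min_order_le_add (f := y - y') (g := y'))
  rw [show x * y - x' * y' = (x - x') * y + x' * (y - y') by ring]
  refine le_trans (le_min ?_ ?_) min_order_le_add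
  · calc p + q + 1 = (p + 1) + q := add_right_comm _ _ _
      _ ≤ (x - x').order + y.order := add_le_add hx hy₀
      _ ≤ _ := le_order_mul
  · calc p + q + 1 = p + (q + 1) := add_assoc _ _ _
      _ ≤ x'.order + (y - y').order := add_le_add hx' hy
      _ ≤ _ := le_order_mul

theorem le_order_pow_sub_pow {u v : MvPowerSeries σ R} (huv : 2 ≤ (u - v).order)
    (hv : constantCoeff v = 0) (k : ℕ) : (k + 1 : ℕ∞) ≤ (u ^ k - v ^ k).order := by
  induction k with
  | zero => simp
  | succ k ih =>
    rw [pow_succ, pow_succ]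
    exact_mod_cast le_order_mul_sub_mul ih (le_order_pow_of_constantCoeff_eq_zero k hv)
      (by simpa [one_add_one_eq_two] using huv) ((one_le_order_iff_constCoeff_eq_zero).2 hv)

theorem degree_le_order_monomial (d : σ →₀ ℕ) (r : R) :
    (d.degree : ℕ∞) ≤ (monomial d r).order := by
  classical
  rw [order_monomial]
  split_ifs <;> simp

def TangentToId (a : σ → MvPowerSeries σ R) : Prop :=
  ∀ i, 2 ≤ (a i - X i).order

noncomputable def substPreimageApprox (a : σ → MvPowerSeries σ R) (g : MvPowerSeries σ R) :
    ℕ → MvPowerSeries σ R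
  | 0 => 0
  | k + 1 => substPreimageApprox a g k + (g - subst a (substPreimageApprox a g k))

namespace TangentToId

variable {a : σ → MvPowerSeries σ R} (ha : TangentToId a)
include ha

theorem constantCoeff_eq_zero (i : σ) : constantCoeff (a i) = 0 := by
  have h := (one_le_order_iff_constCoeff_eq_zero).1 (le_trans (by norm_num) (ha i))
  simpa using h

theorem hasSubst [Finite σ] : HasSubst a :=
  hasSubst_of_constantCoeff_zero ha.constantCoeff_eq_zero

theorem le_order_prod_pow_sub_monomial (d : σ →₀ ℕ) :
    (d.degree + 1 : ℕ∞) ≤ (d.prod (fun i k ↦ a i ^ k) - monomial d 1).order := by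
  induction d using Finsupp.induction_linear with
  | zero => simp
  | add d₁ d₂ h₁ h₂ =>
    rw [Finsupp.prod_add_index' (fun _ ↦ pow_zero _) (fun _ _ _ ↦ pow_add _ _ _),
      show monomial (d₁ + d₂) (1 : R) = monomial d₁ 1 * monomial d₂ 1 by
        rw [monomial_mul_monomial, one_mul], map_add, Nat.cast_add]
    exact le_order_mul_sub_mul h₁ (degree_le_order_monomial d₁ 1) h₂
      (degree_le_order_monomial d₂ 1)
  | single i k =>
    rw [Finsupp.prod_single_index (h := fun i k ↦ a i ^ k) (pow_zero _), ← X_pow_eq,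
      Finsupp.degree_single]
    exact le_order_pow_sub_pow (ha i) (constantCoeff_X i) k

theorem coeff_prod_pow [DecidableEq σ] {d e : σ →₀ ℕ} (hed : e.degree ≤ d.degree) :
    coeff e (d.prod fun i k ↦ a i ^ k) = if e = d then 1 else 0 := by
  have h := coeff_of_lt_order ((Nat.cast_lt.2 (Nat.lt_succ_of_le hed)).trans_le
    (ha.le_order_prod_pow_sub_monomial d))
  rw [map_sub, sub_eq_zero, coeff_monomial] at h
  exact h

variable [Finite σ]

theorem coeff_subst_of_degree_le_order {f : MvPowerSeries σ R} {e : σ →₀ ℕ}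
    (he : (e.degree : ℕ∞) ≤ f.order) : coeff e (subst a f) = coeff e f := by
  classical
  rw [coeff_subst ha.hasSubst, finsum_eq_single _ e, ha.coeff_prod_pow le_rfl, if_pos rfl,
    smul_eq_mul, mul_one]
  intro d hde
  by_cases hd : coeff d f = 0
  · rw [hd, zero_smul]
  · have hed : e.degree ≤ d.degree := by exact_mod_cast he.trans (order_le hd)
    rw [ha.coeff_prod_pow hed, if_neg (Ne.symm hde), smul_zero]

theorem order_add_one_le_order_subst_sub (f : MvPowerSeries σ R) :
    f.order + 1 ≤ (subst a f - f).order := by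
  refine le_order fun e he ↦ ?_
  have he' : (e.degree : ℕ∞) ≤ f.order := by
    rcases eq_or_ne f.order ⊤ with h | h
    · simp [h]
    · exact (ENat.lt_add_one_iff h).1 he
  rw [map_sub, ha.coeff_subst_of_degree_le_order he', sub_self]

theorem order_le_order_subst (f : MvPowerSeries σ R) : f.order ≤ (subst a f).order := by
  refine le_order fun e he ↦ ?_
  rw [ha.coeff_subst_of_degree_le_order he.le, coeff_of_lt_order he]

theorem subst_injective : Function.Injective (subst (R := R) a) := by
  intro f g hfg
  have h := ha.order_add_one_le_order_subst_sub (f - g)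
  rw [subst_sub ha.hasSubst, hfg, sub_self, zero_sub, order_neg] at h
  have htop : (f - g).order = ⊤ := by
    by_contra hne
    exact (ENat.add_one_le_iff hne).1 h |>.false
  rwa [order_eq_top_iff, sub_eq_zero] at htop

variable (g : MvPowerSeries σ R)

theorem le_order_sub_subst_substPreimageApprox (k : ℕ) :
    (k : ℕ∞) ≤ (g - subst a (substPreimageApprox a g k)).order := by
  induction k with
  | zero => simp
  | succ k ih =>
    set r := g - subst a (substPreimageApprox a g k)
    have hr : g - subst a (substPreimageApprox a g (k + 1)) = -(subst a r - r) := by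
      rw [substPreimageApprox, subst_add ha.hasSubst]
      ring
    rw [hr, order_neg, Nat.cast_succ]
    exact (by gcongr : (k : ℕ∞) + 1 ≤ r.order + 1).trans
      (ha.order_add_one_le_order_subst_sub r)

theorem coeff_substPreimageApprox_of_le {e : σ →₀ ℕ} {k j : ℕ} (hek : e.degree < k)
    (hkj : k ≤ j) :
    coeff e (substPreimageApprox a g j) = coeff e (substPreimageApprox a g k) := by
  induction j, hkj using Nat.le_induction with
  | base => rfl
  | succ j hkj ih =>
    rw [substPreimageApprox, map_add, ← ih, add_eq_left]
    exact coeff_of_lt_order <| (Nat.cast_lt.2 (hek.trans_le hkj)).trans_le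
      (ha.le_order_sub_subst_substPreimageApprox g j)

theorem subst_surjective : Function.Surjective (subst (R := R) a) := by
  intro g
  let f : MvPowerSeries σ R := fun e ↦ coeff e (substPreimageApprox a g (e.degree + 1))
  have hf : ∀ k : ℕ, (k : ℕ∞) ≤ (f - substPreimageApprox a g k).order := fun k ↦
    le_order fun e he ↦ by
      rw [map_sub, sub_eq_zero]
      exact (ha.coeff_substPreimageApprox_of_le g (Nat.lt_succ_self _)
        (Nat.succ_le_of_lt (by exact_mod_cast he))).symm
  refine ⟨f, ?_⟩
  rw [eq_comm, ← sub_eq_zero, ← order_eq_top_iff, ENat.eq_top_iff_forall_ge]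
  intro k
  have h : g - subst a f = (g - subst a (substPreimageApprox a g k)) -
      subst a (f - substPreimageApprox a g k) := by
    rw [subst_sub ha.hasSubst]
    ring
  rw [h, sub_eq_add_neg]
  refine le_trans (le_min (ha.le_order_sub_subst_substPreimageApprox g k) ?_) min_order_le_add
  rw [order_neg]
  exact (hf k).trans (ha.order_le_order_subst _)

noncomputable def substAlgEquiv : MvPowerSeries σ R ≃ₐ[R] MvPowerSeries σ R :=
  AlgEquiv.ofBijective (substAlgHom ha.hasSubst) <| by
    rw [coe_substAlgHom]
    exact ⟨ha.subst_injective, ha.subst_surjective⟩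

@[simp]
theorem substAlgEquiv_apply (f : MvPowerSeries σ R) : ha.substAlgEquiv f = subst a f :=
  substAlgHom_apply ha.hasSubst f

end TangentToId

noncomputable def substAlgEquivOfInverse {a b : σ → MvPowerSeries σ R} (ha : HasSubst a)
    (hb : HasSubst b) (hab : ∀ i, subst a (b i) = X i) (hba : ∀ i, subst b (a i) = X i) :
    MvPowerSeries σ R ≃ₐ[R] MvPowerSeries σ R :=
  AlgEquiv.ofAlgHom (substAlgHom ha) (substAlgHom hb)
    (AlgHom.ext fun f ↦ by
      simp only [AlgHom.comp_apply, coe_substAlgHom, AlgHom.id_apply]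
      rw [subst_comp_subst_apply hb ha, funext hab, subst_self, id])
    (AlgHom.ext fun f ↦ by
      simp only [AlgHom.comp_apply, coe_substAlgHom, AlgHom.id_apply]
      rw [subst_comp_subst_apply ha hb, funext hba, subst_self, id])

section LinearPart

variable [Fintype σ]

noncomputable def linearPart (L : MvPowerSeries σ R) : MvPowerSeries σ R :=
  ∑ i, C (coeff (Finsupp.single i 1) L) * X i

theorem two_le_order_sub_linearPart {L : MvPowerSeries σ R} (hL : constantCoeff L = 0) :
    2 ≤ (L - linearPart L).order := by
  classical
  refine le_order fun e he ↦ ?_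
  have he' : e.degree < 2 := by exact_mod_cast he
  rw [map_sub, sub_eq_zero, linearPart, map_sum]
  simp_rw [coeff_C_mul, coeff_X]
  rcases Nat.lt_succ_iff_lt_or_eq.1 he' with h0 | h1
  · obtain rfl : e = 0 := (Finsupp.degree_eq_zero_iff e).1 (Nat.lt_one_iff.1 h0)
    simp [hL, eq_comm (a := (0 : σ →₀ ℕ))]
  · have he1 : e ∈ {d : σ →₀ ℕ | d.degree = 1} := h1
    rw [← Finsupp.range_single_one] at he1
    obtain ⟨j, rfl⟩ := he1
    simp [Finsupp.single_left_inj one_ne_zero]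

theorem exists_algEquiv_linearPart_eq {K : Type*} [Field K] {L : MvPowerSeries σ K}
    (hL : constantCoeff L = 0) {j : σ} (hj : coeff (Finsupp.single j 1) L ≠ 0) :
    ∃ W : MvPowerSeries σ K ≃ₐ[K] MvPowerSeries σ K,
      W (linearPart L) = L ∧ ∀ i ≠ j, W (X i) = X i := by
  classical
  set c := coeff (Finsupp.single j 1) L
  set δ := C c⁻¹ * (L - linearPart L)
  set w : σ → MvPowerSeries σ K := fun i ↦ X i + if i = j then δ else 0
  have hw : TangentToId w := by
    intro i
    rcases eq_or_ne i j with rfl | hij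
    · simpa [w, δ] using (two_le_order_sub_linearPart hL).trans
        (le_order_mul.trans' (by simp))
    · simp [w, hij]
  refine ⟨hw.substAlgEquiv, ?_, fun i hij ↦ ?_⟩
  · rw [hw.substAlgEquiv_apply, linearPart, ← substAlgHom_apply hw.hasSubst, map_sum]
    simp_rw [map_mul, substAlgHom_X, substAlgHom_apply, subst_C, w, mul_add, mul_ite, mul_zero,
      Finset.sum_add_distrib, Finset.sum_ite_eq', Finset.mem_univ, if_true]
    rw [← linearPart, ← mul_assoc, ← map_mul, mul_inv_cancel₀ hj, map_one, one_mul,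
      add_sub_cancel]
  · simp [subst_X hw.hasSubst, w, hij]

end LinearPart


theorem exists_algEquiv_sq_add_sq_eq {a b c : ℂ} (ha : a ≠ 0) :
    ∃ Λ : MvPowerSeries (Fin 3) ℂ ≃ₐ[ℂ] MvPowerSeries (Fin 3) ℂ,
      Λ (X 0) ^ 2 + Λ (X 1) ^ 2 = X 1 * (C a * X 0 + C b * X 1 + C c * X 2) ∧ Λ (X 2) = X 2 := by
  set ℓ : MvPowerSeries (Fin 3) ℂ := C a * X 0 + C b * X 1 + C c * X 2 with hℓ
  have hI : (C Complex.I * C Complex.I : MvPowerSeries (Fin 3) ℂ) = -1 := by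
    rw [← map_mul, Complex.I_mul_I, map_neg, map_one]
  have h2 : (C 2⁻¹ * 2 : MvPowerSeries (Fin 3) ℂ) = 1 := by
    rw [← map_ofNat C 2, ← map_mul, inv_mul_cancel₀ two_ne_zero, map_one]
  have ha' : (C a * C a⁻¹ : MvPowerSeries (Fin 3) ℂ) = 1 := by
    rw [← map_mul, mul_inv_cancel₀ ha, map_one]
  -- `((ℓ + x₂) / 2) ^ 2 + (i (ℓ - x₂) / 2) ^ 2 = ℓ x₂`
  set u : Fin 3 → MvPowerSeries (Fin 3) ℂ :=
    ![C 2⁻¹ * (ℓ + X 1), C Complex.I * C 2⁻¹ * (ℓ - X 1), X 2]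
  set E : MvPowerSeries (Fin 3) ℂ :=
    X 0 - C Complex.I * X 1 - C b * (X 0 + C Complex.I * X 1) - C c * X 2
  set v : Fin 3 → MvPowerSeries (Fin 3) ℂ := ![C a⁻¹ * E, X 0 + C Complex.I * X 1, X 2]
  have hu : HasSubst u := hasSubst_of_constantCoeff_zero fun i ↦ by fin_cases i <;> simp [u, ℓ]
  have hv : HasSubst v := hasSubst_of_constantCoeff_zero fun i ↦ by fin_cases i <;> simp [v, E]
  have huv : ∀ i, subst u (v i) = X i := by
    intro i
    fin_cases i <;> simp [u, v, E, subst_add hu, subst_sub hu, subst_mul hu, subst_X hu]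
    · rw [hℓ]
      linear_combination (-(C a⁻¹ * (1 + C b) * C 2⁻¹ * (ℓ - X 1))) * hI +
        (C a⁻¹ * (ℓ - C b * X 1)) * h2 + X 0 * ha'
    · linear_combination C 2⁻¹ * (ℓ - X 1) * hI + X 1 * h2
  have hvu : ∀ i, subst v (u i) = X i := by
    intro i
    fin_cases i <;> simp [u, v, ℓ, subst_add hv, subst_sub hv, subst_mul hv, subst_X hv]
    · linear_combination C 2⁻¹ * E * ha' + X 0 * h2
    · linear_combination C Complex.I * C 2⁻¹ * E * ha' - 2 * C 2⁻¹ * X 1 * hI + X 1 * h2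
  refine ⟨substAlgEquivOfInverse hu hv huv hvu, ?_, ?_⟩
  · simp [substAlgEquivOfInverse, subst_X hu, u]
    linear_combination (C 2⁻¹ ^ 2 * (ℓ - X 1) ^ 2) * hI + (ℓ * X 1 * (2 * C 2⁻¹ + 1)) * h2
  · simp [substAlgEquivOfInverse, subst_X hu, u]

theorem isAkSingularityAtOrigin_X_one_mul_add_X_two_pow {L : MvPowerSeries (Fin 3) ℂ}
    (hL : constantCoeff L = 0) (hL₁ : coeff (Finsupp.single 0 1) L ≠ 0) (n : ℕ) :
    IsAkSingularityAtOrigin (X 1 * L + X 2 ^ (n + 1)) n := by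
  obtain ⟨W, hWL, hWX⟩ := exists_algEquiv_linearPart_eq hL hL₁
  obtain ⟨Λ, hΛ, hΛ₂⟩ := exists_algEquiv_sq_add_sq_eq (b := coeff (Finsupp.single 1 1) L)
    (c := coeff (Finsupp.single 2 1) L) hL₁
  have hℓ : linearPart L = C (coeff (Finsupp.single 0 1) L) * X 0 +
      C (coeff (Finsupp.single 1 1) L) * X 1 + C (coeff (Finsupp.single 2 1) L) * X 2 := by
    simp [linearPart, Fin.sum_univ_three, add_assoc]
  have hΛN : Λ (X 0 ^ 2 + X 1 ^ 2 + X 2 ^ (n + 1)) = X 1 * linearPart L + X 2 ^ (n + 1) := by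
    rw [map_add, map_add, map_pow, map_pow, map_pow, hΛ, hΛ₂, hℓ]
  refine ⟨(Λ.trans W).symm, ?_⟩
  rw [AlgEquiv.symm_apply_eq, AlgEquiv.trans_apply, hΛN, map_add, map_mul, map_pow, hWL,
    hWX 1 (by decide), hWX 2 (by decide)]

end MvPowerSeries

theorem stmt_1_general (d : ℕ) (hd : 3 ≤ d)
    (l₁ l₂ l₃ : MvPolynomial (Fin 3) ℂ)
    (hl₁0 : MvPolynomial.coeff 0 l₁ ≠ 0) :
    IsAkSingularityAtOrigin
      ((X 1 * (X 2 * l₃ + X 1 * l₂ + X 0 * l₁) + X 2 ^ d : MvPolynomial (Fin 3) ℂ) :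
        MvPowerSeries (Fin 3) ℂ) (d - 1) := by
  obtain ⟨n, rfl⟩ : ∃ n, d = n + 1 := ⟨d - 1, by omega⟩
  rw [MvPolynomial.coe_add, MvPolynomial.coe_mul, MvPolynomial.coe_pow, MvPolynomial.coe_X,
    MvPolynomial.coe_X, Nat.add_sub_cancel]
  refine MvPowerSeries.isAkSingularityAtOrigin_X_one_mul_add_X_two_pow ?_ ?_ n
  · rw [← MvPowerSeries.coeff_zero_eq_constantCoeff_apply, MvPolynomial.coeff_coe]
    simp [MvPolynomial.coeff_X_mul']
  · rw [MvPolynomial.coeff_coe]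
    simpa [MvPolynomial.coeff_X_mul'] using hl₁0

/-- For `d ≥ 3`, the surface germ `x₂·(x₃·l₃(x₁,x₂,x₃) + x₂·l₂(x₁,x₂) + x₁·l₁(x₁)) + x₃^d = 0`
with `l₁(0) ≠ 0` has an `A_{d-1}`-singularity at the origin.
(Variables: `x₁ = X 0`, `x₂ = X 1`, `x₃ = X 2`.) -/
theorem stmt_1 (d : ℕ) (hd : 3 ≤ d)
    (l₁ l₂ l₃ : MvPolynomial (Fin 3) ℂ)
    (hl₁ : ∀ m ∈ l₁.support, m 1 = 0 ∧ m 2 = 0)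
    (hl₂ : ∀ m ∈ l₂.support, m 2 = 0)
    (hl₁0 : MvPolynomial.coeff 0 l₁ ≠ 0) :
    IsAkSingularityAtOrigin
      ((X 1 * (X 2 * l₃ + X 1 * l₂ + X 0 * l₁) + X 2 ^ d : MvPolynomial (Fin 3) ℂ) :
        MvPowerSeries (Fin 3) ℂ) (d - 1) :=
  stmt_1_general d hd l₁ l₂ l₃ hl₁0
end

section
/- Let X ⊂ ℙ^N be an irreducible reduced hypersurface and let Λ₁, Λ₂ be two distinct (N−2)-dimensional linear subspaces contained in X, with corresponding hyperplanes Π₁, Π₂ such that Πᵢ ∩ X = d·Λᵢ as divisors on Πᵢ. Then dim(Λ₁ ∩ Λ₂) = N−3 and dim⟨Λ₁, Λ₂⟩ = N−1. -/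
/-!
Set-theoretically `Π₂ ∩ X = Λ₂`, so `Λ₁ ⊆ X` forces `Λ₁ ∩ Π₂ ⊆ Λ₂`. A hyperplane cuts `Λ₁` in
codimension at most one, hence `Λ₁ ∩ Λ₂` has codimension at most one in `Λ₁`, and exactly one
because `Λ₁ ≠ Λ₂`; Grassmann's formula then gives the dimension of the span.
-/

open MvPolynomial Module

/-- `Π ∩ X = d·Λ` as divisors on the hyperplane `Pl`: the restriction of the defining
polynomial `f` of `X` to `Pl` equals, up to a nonzero scalar, the `d`-th power of a linear
form cutting out `Λ` inside `Pl`. -/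
def DivisorCond (N d : ℕ) (f : MvPolynomial (Fin (N + 1)) ℂ)
    (Λ Pl : Submodule ℂ (Fin (N + 1) → ℂ)) : Prop :=
  ∃ (ℓ : (Fin (N + 1) → ℂ) →ₗ[ℂ] ℂ) (c : ℂ), c ≠ 0 ∧
    Λ = Pl ⊓ LinearMap.ker ℓ ∧
    ∀ v ∈ Pl, MvPolynomial.eval v f = c * (ℓ v) ^ d

namespace Submodule

variable {K V : Type*} [DivisionRing K] [AddCommGroup V] [Module K V] [FiniteDimensional K V]

theorem finrank_add_finrank_le_finrank_add_finrank_inf (s t : Submodule K V) :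
    finrank K s + finrank K t ≤ finrank K V + finrank K ↥(s ⊓ t) := by
  rw [← finrank_sup_add_finrank_inf_eq]
  exact Nat.add_le_add_right (finrank_le _) _

theorem finrank_inf_eq_and_finrank_sup_eq_of_ne {s t : Submodule K V} {n : ℕ}
    (hs : finrank K s = n + 1) (ht : finrank K t = n + 1) (hne : s ≠ t)
    (hinf : n ≤ finrank K ↥(s ⊓ t)) :
    finrank K ↥(s ⊓ t) = n ∧ finrank K ↥(s ⊔ t) = n + 2 := by
  have hinf_ne : finrank K ↥(s ⊓ t) ≠ n + 1 := fun h =>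
    hne <| (eq_of_le_of_finrank_eq inf_le_left (h.trans hs.symm)).symm.trans
      (eq_of_le_of_finrank_eq inf_le_right (h.trans ht.symm))
  have hinf_le : finrank K ↥(s ⊓ t) ≤ n + 1 := hs ▸ finrank_mono inf_le_left
  have := finrank_sup_add_finrank_inf_eq s t
  omega

end Submodule

namespace DivisorCond

variable {N d : ℕ} {f : MvPolynomial (Fin (N + 1)) ℂ} {Λ Pl : Submodule ℂ (Fin (N + 1) → ℂ)}

theorem eval_eq_zero (h : DivisorCond N d f Λ Pl) (hd : d ≠ 0) {v : Fin (N + 1) → ℂ}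
    (hv : v ∈ Λ) : eval v f = 0 := by
  obtain ⟨ℓ, c, -, rfl, hev⟩ := h
  rw [hev v hv.1, LinearMap.mem_ker.mp hv.2, zero_pow hd, mul_zero]

theorem inf_le_of_forall_eval_eq_zero (h : DivisorCond N d f Λ Pl) (hd : d ≠ 0)
    {W : Submodule ℂ (Fin (N + 1) → ℂ)} (hW : ∀ v ∈ W, eval v f = 0) : W ⊓ Pl ≤ Λ := by
  obtain ⟨ℓ, c, hc, rfl, hev⟩ := h
  intro v ⟨hvW, hvPl⟩
  have hpow : c * ℓ v ^ d = 0 := by rw [← hev v hvPl, hW v hvW]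
  exact ⟨hvPl, pow_eq_zero_iff hd |>.mp ((mul_eq_zero.mp hpow).resolve_left hc)⟩

end DivisorCond

-- Dimensions are vector-space dimensions, one more than the projective ones.
theorem stmt_5_general (N d : ℕ) (hN : 3 ≤ N) (hd : 3 ≤ d)
    (f : MvPolynomial (Fin (N + 1)) ℂ)
    (Λ₁ Λ₂ Pl₁ Pl₂ : Submodule ℂ (Fin (N + 1) → ℂ))
    (hΛ₁ : finrank ℂ Λ₁ = N - 1) (hΛ₂ : finrank ℂ Λ₂ = N - 1)
    (hPl₂ : finrank ℂ Pl₂ = N)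
    (hne : Λ₁ ≠ Λ₂)
    (hdiv₁ : DivisorCond N d f Λ₁ Pl₁) (hdiv₂ : DivisorCond N d f Λ₂ Pl₂) :
    finrank ℂ ↥(Λ₁ ⊓ Λ₂) = N - 2 ∧ finrank ℂ ↥(Λ₁ ⊔ Λ₂) = N := by
  have hd₀ : d ≠ 0 := by omega
  have hle : Λ₁ ⊓ Pl₂ ≤ Λ₁ ⊓ Λ₂ := le_inf inf_le_left
    (hdiv₂.inf_le_of_forall_eval_eq_zero hd₀ fun _ hv => hdiv₁.eval_eq_zero hd₀ hv)
  have hlow : N - 2 ≤ finrank ℂ ↥(Λ₁ ⊓ Λ₂) := by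
    have hgrass := Submodule.finrank_add_finrank_le_finrank_add_finrank_inf Λ₁ Pl₂
    rw [finrank_fin_fun] at hgrass
    have := Submodule.finrank_mono hle
    omega
  obtain ⟨hinf, hsup⟩ := Submodule.finrank_inf_eq_and_finrank_sup_eq_of_ne (n := N - 2)
    (by omega) (by omega) hne hlow
  exact ⟨hinf, by omega⟩

/-- If `Λ₁ ≠ Λ₂` are `(N-2)`-dimensional linear subspaces (vector dimension `N-1`) of an
irreducible hypersurface `X ⊂ ℙ^N` with hyperplanes `Π₁, Π₂` such that `Πᵢ ∩ X = d·Λᵢ`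
as divisors, then `dim(Λ₁ ∩ Λ₂) = N-3` and `dim⟨Λ₁,Λ₂⟩ = N-1` (projectively; in vector
space dimensions: `N-2` and `N`). -/
theorem stmt_5 (N d : ℕ) (hN : 3 ≤ N) (hd : 3 ≤ d)
    (f : MvPolynomial (Fin (N + 1)) ℂ) (hf : f.IsHomogeneous d) (hirr : Irreducible f)
    (Λ₁ Λ₂ Pl₁ Pl₂ : Submodule ℂ (Fin (N + 1) → ℂ))
    (hΛ₁ : finrank ℂ Λ₁ = N - 1) (hΛ₂ : finrank ℂ Λ₂ = N - 1)
    (hPl₁ : finrank ℂ Pl₁ = N) (hPl₂ : finrank ℂ Pl₂ = N)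
    (hle₁ : Λ₁ ≤ Pl₁) (hle₂ : Λ₂ ≤ Pl₂)
    (hne : Λ₁ ≠ Λ₂)
    (hdiv₁ : DivisorCond N d f Λ₁ Pl₁) (hdiv₂ : DivisorCond N d f Λ₂ Pl₂) :
    finrank ℂ ↥(Λ₁ ⊓ Λ₂) = N - 2 ∧ finrank ℂ ↥(Λ₁ ⊔ Λ₂) = N :=
  stmt_5_general N d hN hd f Λ₁ Λ₂ Pl₁ Pl₂ hΛ₁ hΛ₂ hPl₂ hne hdiv₁ hdiv₂
end

section
/- Let X ⊂ ℙ³ be a surface of degree d ≥ 3 defined by X₃·g(X₀,X₁,X₃) + X₂·(X₃·L₃(X₀,X₁,X₂,X₃) + X₂·L₂(X₀,X₁,X₂) + L(X₀,X₁)) = 0, and let Λ be the line X₂ = X₃ = 0. Then the scheme Sing(X) ∩ Λ is defined inside Λ ≅ ℙ¹ by the equations g(X₀,X₁,0) = 0 and L(X₀,X₁) = 0. In particular, if Sing(X) ∩ Λ contains d−1 distinct points and deg g(X₀,X₁,0) ≤ d−1, deg L = d−1, then g(X₀,X₁,0) = α·L(X₀,X₁) for some α ∈ ℂ. -/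
open MvPolynomial

/-!
On the line `Λ = {X₂ = X₃ = 0}` only the terms `X₃·g` and `X₂·L` of `f` contribute to the
gradient, which gives the description of `Sing(X) ∩ Λ`. For the second part, restrict `g` and `L`
to `Λ`: they become binary forms of degree `n = d - 1`. A nonzero binary form of degree `n` has at
most `n` zeros in `ℙ¹`, since dehomogenizing turns its zeros with `X₁ ≠ 0` into roots of a
polynomial of degree `≤ n`, and a zero at `X₁ = 0` lowers that degree. For a point `y` of `ℙ¹`
other than the `n` common zeros, `L(y) ≠ 0` (or `L` would have `n + 1` zeros), and
`g - (g(y)/L(y))·L` vanishes at `n + 1` points, so it is zero.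
-/

namespace Polynomial

lemma eval_homogenize_of_eq_zero {R : Type*} [CommSemiring R] (p : R[X]) (n : ℕ)
    {x : Fin 2 → R} (hx : x 1 = 0) :
    MvPolynomial.eval x (p.homogenize n) = p.coeff n * x 0 ^ n := by
  rw [homogenize, map_sum, Finset.Nat.sum_antidiagonal_eq_sum_range_succ_mk, Finset.sum_range_succ,
    Finset.sum_eq_zero fun k hk => ?_, zero_add]
  · simp [MvPolynomial.eval_monomial, Finsupp.prod_fintype, hx]
  · have : n - k ≠ 0 := Nat.sub_ne_zero_of_lt (Finset.mem_range.1 hk)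
    simp [MvPolynomial.eval_monomial, Finsupp.prod_fintype, hx, this]

variable {K : Type*} [Field K] {p : K[X]} {n : ℕ}

open Classical in
lemma card_affineZeros_le_natDegree {ι : Type*} [Fintype ι] {P : ι → Fin 2 → K} (hp0 : p ≠ 0)
    (hpn : p.natDegree ≤ n) (hPP : Pairwise fun i j => P i 0 * P j 1 ≠ P j 0 * P i 1)
    (hPp : ∀ i, MvPolynomial.eval (P i) (p.homogenize n) = 0) :
    (Finset.univ.filter fun i => P i 1 ≠ 0).card ≤ p.natDegree := calc
  _ ≤ p.roots.toFinset.card := by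
    refine Finset.card_le_card_of_injOn (fun i => P i 0 / P i 1) (fun i hi => ?_) ?_
    · have hi : P i 1 ≠ 0 := (Finset.mem_filter.1 hi).2
      have := hPp i
      rw [eval_homogenize hpn _ hi, mul_eq_zero] at this
      simpa [hp0, hi] using this
    · intro i hi j hj hij
      by_contra hne
      exact hPP hne
        ((div_eq_div_iff (Finset.mem_filter.1 hi).2 (Finset.mem_filter.1 hj).2).1 hij)
  _ ≤ p.roots.card := Multiset.toFinset_card_le _
  _ ≤ p.natDegree := p.card_roots'

lemma natDegree_lt_of_eval_homogenize_eq_zero (hp0 : p ≠ 0) (hpn : p.natDegree ≤ n)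
    {x : Fin 2 → K} (hx : x ≠ 0) (hx1 : x 1 = 0)
    (hpx : MvPolynomial.eval x (p.homogenize n) = 0) : p.natDegree < n := by
  have hx0 : x 0 ≠ 0 := fun hx0 => hx (_root_.funext (Fin.forall_fin_two.2 ⟨hx0, hx1⟩))
  rw [eval_homogenize_of_eq_zero _ _ hx1, mul_eq_zero] at hpx
  have hc : p.coeff n = 0 := hpx.resolve_right (pow_ne_zero _ hx0)
  exact hpn.lt_of_ne fun h => hp0 (leadingCoeff_eq_zero.1 (by rwa [leadingCoeff, h]))

end Polynomial

namespace MvPolynomial.IsHomogeneous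

lemma exists_homogenize_eq {R : Type*} [CommSemiring R] {F : MvPolynomial (Fin 2) R} {n : ℕ}
    (hF : F.IsHomogeneous n) : ∃ p : Polynomial R, p.natDegree ≤ n ∧ p.homogenize n = F := by
  refine ⟨MvPolynomial.aeval ![Polynomial.X, 1] F, ?_,
    Polynomial.homogenize_eq_of_isHomogeneous hF rfl⟩
  simpa using aeval_natDegree_le F hF.totalDegree_le _ (n := 1)
    (by simp [Fin.forall_fin_two, Polynomial.natDegree_X_le])

variable {K : Type*} [Field K] {F G : MvPolynomial (Fin 2) K} {n : ℕ}

theorem eq_zero_of_card_lt_of_eval_eq_zero (hF : F.IsHomogeneous n) {ι : Type*} [Fintype ι]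
    (hι : n < Fintype.card ι) {P : ι → Fin 2 → K} (hP : ∀ i, P i ≠ 0)
    (hPP : Pairwise fun i j => P i 0 * P j 1 ≠ P j 0 * P i 1) (hPF : ∀ i, eval (P i) F = 0) :
    F = 0 := by
  classical
  obtain ⟨p, hpn, rfl⟩ := hF.exists_homogenize_eq
  by_contra hF0
  have hp0 : p ≠ 0 := by rintro rfl; simp at hF0
  have hA := Polynomial.card_affineZeros_le_natDegree hp0 hpn hPP hPF
  set B := Finset.univ.filter fun i => P i 1 = 0
  have hB : B.card ≤ 1 := Finset.card_le_one.2 fun i hi j hj => by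
    by_contra hne
    exact hPP hne
      (by rw [(Finset.mem_filter.1 hi).2, (Finset.mem_filter.1 hj).2, mul_zero, mul_zero])
  have hAB : (Finset.univ.filter fun i => P i 1 ≠ 0).card + B.card = Fintype.card ι := by
    simpa [B] using Finset.card_filter_add_card_filter_not (s := Finset.univ) (fun i => P i 1 ≠ 0)
  rcases B.eq_empty_or_nonempty with hB0 | ⟨i, hi⟩
  · rw [hB0, Finset.card_empty] at hAB
    omega
  · have := Polynomial.natDegree_lt_of_eval_homogenize_eq_zero hp0 hpn (hP i)
      (Finset.mem_filter.1 hi).2 (hPF i)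
    omega

theorem exists_eq_smul_of_eval_eq_zero [Infinite K] (hF : F.IsHomogeneous n)
    (hG : G.IsHomogeneous n) (hG0 : G ≠ 0) {P : Fin n → Fin 2 → K} (hP : ∀ i, P i ≠ 0)
    (hPP : Pairwise fun i j => P i 0 * P j 1 ≠ P j 0 * P i 1) (hPF : ∀ i, eval (P i) F = 0)
    (hPG : ∀ i, eval (P i) G = 0) : ∃ α : K, F = α • G := by
  classical
  obtain ⟨t, ht⟩ := Infinite.exists_notMem_finset (Finset.univ.image fun i => P i 0 / P i 1)
  set y : Fin 2 → K := ![t, 1]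
  have hy : ∀ i, P i 0 * y 1 ≠ y 0 * P i 1 := by
    intro i h
    simp only [y, Matrix.cons_val_zero, Matrix.cons_val_one, mul_one] at h
    by_cases hi1 : P i 1 = 0
    · exact hP i (_root_.funext (Fin.forall_fin_two.2 ⟨by simpa [hi1] using h, hi1⟩))
    · exact ht (Finset.mem_image.2
        ⟨i, Finset.mem_univ _, by rw [h, mul_div_cancel_right₀ _ hi1]⟩)
  set Q : Option (Fin n) → Fin 2 → K := fun o => o.elim y P
  have hQ : ∀ o, Q o ≠ 0 := by
    rintro (_ | i)
    · simp [Q, y]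
    · exact hP i
  have hQQ : Pairwise fun o o' => Q o 0 * Q o' 1 ≠ Q o' 0 * Q o 1 := by
    rintro (_ | i) (_ | j) hij
    · exact absurd rfl hij
    · exact (hy j).symm
    · exact hy i
    · exact hPP fun h => hij (congrArg some h)
  have hn : n < Fintype.card (Option (Fin n)) := by simp
  have hGy : eval y G ≠ 0 := fun hy0 =>
    hG0 (hG.eq_zero_of_card_lt_of_eval_eq_zero hn hQ hQQ (Option.rec hy0 hPG))
  refine ⟨eval y F / eval y G, sub_eq_zero.1 ?_⟩
  refine (hF.sub ?_).eq_zero_of_card_lt_of_eval_eq_zero hn hQ hQQ ?_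
  · rw [smul_eq_C_mul]
    exact hG.C_mul _
  · rintro (_ | i)
    · simp [Q, hGy]
    · simp [Q, hPF, hPG]

end MvPolynomial.IsHomogeneous

namespace MvPolynomial

variable {R : Type*} [CommSemiring R]

noncomputable def lineRestrict : MvPolynomial (Fin 4) R →ₐ[R] MvPolynomial (Fin 2) R :=
  aeval ![X 0, X 1, 0, 0]

lemma eval_lineRestrict (F : MvPolynomial (Fin 4) R) (a b : R) :
    eval ![a, b] (lineRestrict F) = eval ![a, b, 0, 0] F := by
  rw [lineRestrict, aeval_eq_bind₁, eval, eval₂Hom_bind₁, eval]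
  congr 2
  funext i
  fin_cases i <;> simp

lemma IsHomogeneous.lineRestrict {F : MvPolynomial (Fin 4) R} {n : ℕ} (hF : F.IsHomogeneous n) :
    (lineRestrict F).IsHomogeneous n := by
  have := hF.aeval (![X 0, X 1, 0, 0] : Fin 4 → MvPolynomial (Fin 2) R) (n := 1)
    (by simp [Fin.forall_fin_succ, isHomogeneous_X, isHomogeneous_zero])
  rwa [one_mul] at this

lemma rename_lineRestrict (F : MvPolynomial (Fin 4) R) :
    rename (![0, 1] : Fin 2 → Fin 4) (lineRestrict F) = aeval ![X 0, X 1, 0, 0] F := by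
  rw [lineRestrict, ← AlgHom.comp_apply, comp_aeval]
  congr 1
  ext i
  fin_cases i <;> simp

lemma rename_lineRestrict_eq_self {F : MvPolynomial (Fin 4) R}
    (hF : ∀ m ∈ F.support, m 2 = 0 ∧ m 3 = 0) :
    rename (![0, 1] : Fin 2 → Fin 4) (lineRestrict F) = F := calc
  _ = aeval ![X 0, X 1, 0, 0] F := rename_lineRestrict F
  _ = aeval X F := eval₂_congr _ _ _ fun {i m} hi hm => by
    obtain ⟨h2, h3⟩ := hF m (mem_support_iff.2 hm)
    fin_cases i <;> simp_all
  _ = F := aeval_X_left_apply F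

lemma rename_lineRestrict_eq_aeval {F : MvPolynomial (Fin 4) R} (hF : ∀ m ∈ F.support, m 2 = 0) :
    rename (![0, 1] : Fin 2 → Fin 4) (lineRestrict F) =
      aeval (fun j : Fin 4 => if j = 3 then 0 else X j) F := by
  rw [rename_lineRestrict]
  exact eval₂_congr _ _ _ fun {i m} hi hm => by
    have h2 := hF m (mem_support_iff.2 hm)
    fin_cases i <;> simp_all

end MvPolynomial

theorem forall_eval_pderiv_eq_zero_iff {R : Type*} [CommRing R]
    (g L₃ L₂ L : MvPolynomial (Fin 4) R) (a b : R) :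
    (∀ i, eval ![a, b, 0, 0] (pderiv i (X 3 * g + X 2 * (X 3 * L₃ + X 2 * L₂ + L))) = 0) ↔
      eval ![a, b, 0, 0] g = 0 ∧ eval ![a, b, 0, 0] L = 0 := by
  simp [Fin.forall_fin_succ, pderiv_X, Pi.single_apply, and_comm]

theorem stmt_9_general (d : ℕ)
    (g L₃ L₂ L : MvPolynomial (Fin 4) ℂ)
    (hg : g.IsHomogeneous (d - 1)) (hgsupp : ∀ m ∈ g.support, m 2 = 0)
    (hL : L.IsHomogeneous (d - 1)) (hLsupp : ∀ m ∈ L.support, m 2 = 0 ∧ m 3 = 0)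
    (f : MvPolynomial (Fin 4) ℂ)
    (hfdef : f = X 3 * g + X 2 * (X 3 * L₃ + X 2 * L₂ + L)) :
    (∀ a b : ℂ, (∀ i, eval ![a, b, 0, 0] (pderiv i f) = 0) ↔
        (eval ![a, b, 0, 0] g = 0 ∧ eval ![a, b, 0, 0] L = 0)) ∧
    (L ≠ 0 →
      ∀ P : Fin (d - 1) → ℂ × ℂ, (∀ i, P i ≠ 0) →
      (∀ i j, i ≠ j → (P i).1 * (P j).2 ≠ (P j).1 * (P i).2) →
      (∀ i, eval ![(P i).1, (P i).2, 0, 0] g = 0 ∧ eval ![(P i).1, (P i).2, 0, 0] L = 0) →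
      ∃ α : ℂ, aeval (fun j : Fin 4 => if j = 3 then 0 else X j) g = α • L) := by
  subst hfdef
  refine ⟨forall_eval_pderiv_eq_zero_iff g L₃ L₂ L, fun hL0 P hP hPP hPgL => ?_⟩
  have hL' : lineRestrict L ≠ 0 := fun h =>
    hL0 (by rw [← rename_lineRestrict_eq_self hLsupp, h, map_zero])
  obtain ⟨α, hα⟩ := hg.lineRestrict.exists_eq_smul_of_eval_eq_zero hL.lineRestrict hL'
    (P := fun i => ![(P i).1, (P i).2])
    (fun i => by simpa [Prod.ext_iff, funext_iff, Fin.forall_fin_two] using hP i)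
    (fun i j hij => by simpa using hPP i j hij)
    (fun i => by simpa [eval_lineRestrict] using (hPgL i).1)
    (fun i => by simpa [eval_lineRestrict] using (hPgL i).2)
  refine ⟨α, ?_⟩
  rw [← rename_lineRestrict_eq_aeval hgsupp, hα, map_smul, rename_lineRestrict_eq_self hLsupp]

/-- Let `X ⊂ ℙ³` be the surface of degree `d ≥ 3` defined by
`X₃·g(X₀,X₁,X₃) + X₂·(X₃·L₃(X₀,X₁,X₂,X₃) + X₂·L₂(X₀,X₁,X₂) + L(X₀,X₁)) = 0` and `Λ` the line
`X₂ = X₃ = 0`. Then `Sing(X) ∩ Λ` is defined inside `Λ ≅ ℙ¹` by `g(X₀,X₁,0) = 0` and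
`L(X₀,X₁) = 0`; and if `L ≠ 0` (`deg L = d-1`) and `Sing(X) ∩ Λ` contains `d-1` distinct
points, then `g(X₀,X₁,0) = α·L(X₀,X₁)` for some `α ∈ ℂ`. -/
theorem stmt_9 (d : ℕ) (hd : 3 ≤ d)
    (g L₃ L₂ L : MvPolynomial (Fin 4) ℂ)
    (hg : g.IsHomogeneous (d - 1)) (hgsupp : ∀ m ∈ g.support, m 2 = 0)
    (hL₃ : L₃.IsHomogeneous (d - 2))
    (hL₂ : L₂.IsHomogeneous (d - 2)) (hL₂supp : ∀ m ∈ L₂.support, m 3 = 0)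
    (hL : L.IsHomogeneous (d - 1)) (hLsupp : ∀ m ∈ L.support, m 2 = 0 ∧ m 3 = 0)
    (f : MvPolynomial (Fin 4) ℂ)
    (hfdef : f = X 3 * g + X 2 * (X 3 * L₃ + X 2 * L₂ + L)) :
    (∀ a b : ℂ, (∀ i, eval ![a, b, 0, 0] (pderiv i f) = 0) ↔
        (eval ![a, b, 0, 0] g = 0 ∧ eval ![a, b, 0, 0] L = 0)) ∧
    (L ≠ 0 →
      ∀ P : Fin (d - 1) → ℂ × ℂ, (∀ i, P i ≠ 0) →
      (∀ i j, i ≠ j → (P i).1 * (P j).2 ≠ (P j).1 * (P i).2) →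
      (∀ i, eval ![(P i).1, (P i).2, 0, 0] g = 0 ∧ eval ![(P i).1, (P i).2, 0, 0] L = 0) →
      ∃ α : ℂ, aeval (fun j : Fin 4 => if j = 3 then 0 else X j) g = α • L) :=
  stmt_9_general d g L₃ L₂ L hg hgsupp hL hLsupp f hfdef
end

section
/- Let P be a point of an irreducible hypersurface X ⊂ ℙ^N of degree d ≥ 3 such that there is a hyperplane Π with Π ∩ X a cone with vertex P (a star point, possibly singular). Then P is a proper star point: there exists a 1-parameter family X(t) of degree-d hypersurfaces with X(0) = X such that for generic t ≠ 0, P is a smooth point of X(t) and a star point of X(t). Concretely, if in coordinates P = (1:0:⋯:0), Π = {X₁ = 0}, and X is defined by X₁·h(X₀,...,X_N) + g(X₂,...,X_N) = 0, then for general homogeneous forms H of degree d−1 and G of degree d (G independent of X₀, X₁), the hypersurface X(t): X₁·(h + tH) + (g + tG) = 0 has P as a smooth star point for generic t ≠ 0. -/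
open MvPolynomial

/-- The point `e₀ = (1:0:⋯:0)` is a (possibly singular) star point of the hypersurface
`{F = 0}`: there is a hyperplane `{ℓ = 0}` through `e₀` whose section of the hypersurface is a
cone with vertex `e₀`, i.e. for every point `Q` of the section, the line `⟨e₀,Q⟩` lies in the
hypersurface. -/
def IsStarPointAtE0 (N : ℕ) (F : MvPolynomial (Fin (N + 1)) ℂ) : Prop :=
  ∃ ℓ : (Fin (N + 1) → ℂ) →ₗ[ℂ] ℂ, ℓ ≠ 0 ∧
    ℓ (fun i => if i = 0 then 1 else 0) = 0 ∧
    ∀ Q : Fin (N + 1) → ℂ, eval Q F = 0 → ℓ Q = 0 →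
      ∀ s t : ℂ, eval (s • (fun i => if i = 0 then 1 else 0 : Fin (N + 1) → ℂ) + t • Q) F = 0

/-! Take `H = X₀ ^ (d - 1)` and `G = 0`. Since `g` has positive degree and does not involve `X₀, X₁`,
it vanishes at `P`, so `P ∈ X(t)`, and `∂F/∂X₁ (P) = h(P) + t` vanishes for only one value of `t`.
The section of `X(t)` by `X₁ = 0` is `{g = 0}`, and it is a cone with vertex `P`: as `g` is
homogeneous and free of `X₀`, `g(sP + uQ) = g(uQ) = u ^ d g(Q)`. -/

namespace MvPolynomial

variable {R σ : Type*} [CommSemiring R]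

theorem notMem_vars_of_forall_mem_support {p : MvPolynomial σ R} {i : σ}
    (h : ∀ m ∈ p.support, m i = 0) : i ∉ p.vars := by
  rw [mem_vars_iff_mem_support]
  rintro ⟨m, hm, hi⟩
  exact Finsupp.mem_support_iff.mp hi (h m hm)

theorem eval_congr_of_forall_mem_vars {p : MvPolynomial σ R} {x y : σ → R}
    (h : ∀ i ∈ p.vars, x i = y i) : eval x p = eval y p :=
  eval₂Hom_congr' rfl (fun i hi _ => h i hi) rfl

theorem IsHomogeneous.eval_smul {φ : MvPolynomial σ R} {n : ℕ} (hφ : φ.IsHomogeneous n)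
    (t : R) (x : σ → R) : eval (t • x) φ = t ^ n * eval x φ := by
  rw [eval_eq, eval_eq, Finset.mul_sum]
  refine Finset.sum_congr rfl fun m hm => ?_
  have hdeg : ∑ i ∈ m.support, m i = n := by
    rw [← hφ (mem_support_iff.mp hm), Finsupp.weight_apply, Finsupp.sum]
    simp
  simp only [Pi.smul_apply, smul_eq_mul, mul_pow, Finset.prod_mul_distrib,
    Finset.prod_pow_eq_pow_sum, hdeg]
  ring

theorem IsHomogeneous.eval_eq_zero {φ : MvPolynomial σ R} {n : ℕ} (hφ : φ.IsHomogeneous n)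
    (hn : n ≠ 0) {x : σ → R} (hx : ∀ i ∈ φ.vars, x i = 0) : eval x φ = 0 := by
  rw [eval_congr_of_forall_mem_vars (y := (0 : R) • x) (by simpa using hx), hφ.eval_smul,
    zero_pow hn, zero_mul]

variable {j : σ} {A g : MvPolynomial σ R} {x : σ → R}

theorem eval_X_mul_add_of_eq_zero (hx : x j = 0) : eval x (X j * A + g) = eval x g := by
  simp [hx]

theorem eval_pderiv_X_mul_add_of_eq_zero [DecidableEq σ] (hgj : j ∉ g.vars) (hx : x j = 0) :
    eval x (pderiv j (X j * A + g)) = eval x A := by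
  simp [pderiv_eq_zero_of_notMem_vars hgj, hx]

end MvPolynomial

theorem isStarPointAtE0_X_mul_add {N n : ℕ} {j : Fin (N + 1)} (hj : j ≠ 0)
    (A : MvPolynomial (Fin (N + 1)) ℂ) {g : MvPolynomial (Fin (N + 1)) ℂ}
    (hg : g.IsHomogeneous n) (hg0 : 0 ∉ g.vars) :
    IsStarPointAtE0 N (X j * A + g) := by
  refine ⟨LinearMap.proj j, fun hℓ => ?_, by simp [hj], fun Q hQ hQj s u => ?_⟩
  · simpa using LinearMap.congr_fun hℓ (Pi.single j 1)
  rw [LinearMap.proj_apply] at hQj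
  have hgQ : eval Q g = 0 := by rwa [eval_X_mul_add_of_eq_zero hQj] at hQ
  have hcone : eval (s • (fun i => if i = 0 then 1 else 0) + u • Q) g = eval (u • Q) g :=
    eval_congr_of_forall_mem_vars fun i hi => by
      simp [show i ≠ 0 from fun h => hg0 (h ▸ hi)]
  rw [eval_X_mul_add_of_eq_zero (by simp [hj, hQj]), hcone, hg.eval_smul, hgQ, mul_zero]

theorem stmt_11_general (N d : ℕ) (hN : 2 ≤ N) (hd : 3 ≤ d)
    (h g : MvPolynomial (Fin (N + 1)) ℂ)
    (hg : g.IsHomogeneous d)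
    (hgsupp : ∀ m ∈ g.support, m 0 = 0 ∧ m 1 = 0) :
    ∃ H G : MvPolynomial (Fin (N + 1)) ℂ,
      H.IsHomogeneous (d - 1) ∧ G.IsHomogeneous d ∧ (∀ m ∈ G.support, m 0 = 0 ∧ m 1 = 0) ∧
      ∃ S : Finset ℂ, ∀ t : ℂ, t ∉ S → t ≠ 0 →
        (eval (fun i => if i = 0 then 1 else 0 : Fin (N + 1) → ℂ)
            (X 1 * (h + C t * H) + (g + C t * G)) = 0) ∧
        (∃ i, eval (fun i => if i = 0 then 1 else 0 : Fin (N + 1) → ℂ)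
            (pderiv i (X 1 * (h + C t * H) + (g + C t * G))) ≠ 0) ∧
        IsStarPointAtE0 N (X 1 * (h + C t * H) + (g + C t * G)) := by
  set e₀ : Fin (N + 1) → ℂ := fun i => if i = 0 then 1 else 0
  have : NeZero N := ⟨by omega⟩
  have h10 : (1 : Fin (N + 1)) ≠ 0 := Fin.one_pos'.ne'
  have he₀ : e₀ 1 = 0 := if_neg h10
  have hg0 : 0 ∉ g.vars := notMem_vars_of_forall_mem_support fun m hm => (hgsupp m hm).1
  have hg1 : 1 ∉ g.vars := notMem_vars_of_forall_mem_support fun m hm => (hgsupp m hm).2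
  have hge₀ : eval e₀ g = 0 :=
    hg.eval_eq_zero (by omega) fun i hi => if_neg fun (hi0 : i = 0) => hg0 (hi0 ▸ hi)
  refine ⟨X 0 ^ (d - 1), 0, by simpa using (isHomogeneous_X ℂ 0).pow (d - 1),
    isHomogeneous_zero _ _ _, by simp, {-eval e₀ h}, fun t ht _ => ?_⟩
  simp only [mul_zero, add_zero]
  refine ⟨by rw [eval_X_mul_add_of_eq_zero he₀, hge₀], ⟨1, ?_⟩,
    isStarPointAtE0_X_mul_add h10 _ hg hg0⟩
  rw [eval_pderiv_X_mul_add_of_eq_zero hg1 he₀]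
  simpa [e₀, eq_neg_iff_add_eq_zero, add_comm] using ht

/-- Every star point is proper.  Let `P = (1:0:⋯:0)` be a (possibly singular) star point of
`X = {X₁·h + g = 0}` (with `g` independent of `X₀, X₁`, so that the section by `{X₁ = 0}` is a
cone with vertex `P`).  Then there are forms `H` of degree `d-1` and `G` of degree `d`
(independent of `X₀, X₁`) such that for all but finitely many `t ≠ 0`, the point `P` is a
smooth point and a star point of `X(t) = {X₁·(h + tH) + (g + tG) = 0}`. -/
theorem stmt_11 (N d : ℕ) (hN : 2 ≤ N) (hd : 3 ≤ d)
    (h g : MvPolynomial (Fin (N + 1)) ℂ)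
    (hh : h.IsHomogeneous (d - 1)) (hg : g.IsHomogeneous d)
    (hgsupp : ∀ m ∈ g.support, m 0 = 0 ∧ m 1 = 0) :
    ∃ H G : MvPolynomial (Fin (N + 1)) ℂ,
      H.IsHomogeneous (d - 1) ∧ G.IsHomogeneous d ∧ (∀ m ∈ G.support, m 0 = 0 ∧ m 1 = 0) ∧
      ∃ S : Finset ℂ, ∀ t : ℂ, t ∉ S → t ≠ 0 →
        (eval (fun i => if i = 0 then 1 else 0 : Fin (N + 1) → ℂ)
            (X 1 * (h + C t * H) + (g + C t * G)) = 0) ∧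
        (∃ i, eval (fun i => if i = 0 then 1 else 0 : Fin (N + 1) → ℂ)
            (pderiv i (X 1 * (h + C t * H) + (g + C t * G))) ≠ 0) ∧
        IsStarPointAtE0 N (X 1 * (h + C t * H) + (g + C t * G)) :=
  stmt_11_general N d hN hd h g hg hgsupp
end

section
/- Let Γ ⊂ V ≅ ℙ² be an irreducible plane curve of degree d ≥ 3, L ⊂ ℙ^N an (N−3)-dimensional linear subspace with L ∩ V = ∅, and X the cone over Γ with vertex L. If Q is a total inflection point of Γ with tangent line T, then every point P ∈ ⟨Q, L⟩ \ L is a smooth point of X, and the tangent hyperplane T_P(X) equals ⟨T, L⟩; moreover T_P(X) ∩ X = d·⟨Q, L⟩ as divisors, so P is a star point of X. -/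
/-!
Translating along a direction of `L` preserves the zero set of `f`, so over `ℂ` the restriction
of `f` to a line in such a direction either has no root or vanishes identically; in both cases
it is constant, and `f` is invariant under translation by `L`. Homogeneity spreads
`f (Q + t u) = c t^d` to the whole plane `⟨Q, u⟩`, so on the hyperplane `H = ⟨Q, u⟩ ⊕ L` the
polynomial `f` equals `c ℓ^d`, where `ℓ` is a linear form on `H` with kernel `⟨Q⟩ ⊕ L` and
`ℓ u = 1`. For `P ∈ ⟨Q⟩ ⊕ L` and `w ∈ H` this gives `f (P + t w) = c (ℓ w)^d t^d`, whose
linear coefficient vanishes as `d ≥ 2`: the differential of `f` at `P` kills `H`. It is nonzero,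
since at `a Q + z` with `z ∈ L` it is a nonzero multiple of the differential at the smooth point
`Q`; so its kernel is exactly `H`.
-/

open MvPolynomial Module

theorem MvPolynomial.IsHomogeneous.eval_smul_s15 {R σ : Type*} [CommRing R] [Fintype σ]
    {f : MvPolynomial σ R} {d : ℕ} (hf : f.IsHomogeneous d) (a : R) (x : σ → R) :
    eval (a • x) f = a ^ d * eval x f := by
  rw [eval_eq', eval_eq', Finset.mul_sum]
  refine Finset.sum_congr rfl fun m hm => ?_
  have hdeg : ∑ i, m i = d := by
    rw [← hf (mem_support_iff.mp hm), Finsupp.weight_apply, Finsupp.sum_fintype _ _ (by simp)]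
    simp
  simp only [Pi.smul_apply, smul_eq_mul, mul_pow, Finset.prod_mul_distrib,
    Finset.prod_pow_eq_pow_sum, hdeg]
  ring

section LineRestriction

variable {R σ : Type*} [CommRing R]

noncomputable def lineRestriction (f : MvPolynomial σ R) (x w : σ → R) : Polynomial R :=
  aeval (fun i => Polynomial.C (x i) + Polynomial.C (w i) * Polynomial.X) f

theorem eval_lineRestriction (f : MvPolynomial σ R) (x w : σ → R) (t : R) :
    (lineRestriction f x w).eval t = eval (x + t • w) f := by
  unfold lineRestriction
  induction f using MvPolynomial.induction_on with
  | C a => simp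
  | add p q hp hq => simp [hp, hq]
  | mul_X p i hp =>
    simp only [map_mul, aeval_X, Polynomial.eval_mul, hp, Polynomial.eval_add, Polynomial.eval_C,
      Polynomial.eval_X, eval_X, Pi.add_apply, Pi.smul_apply, smul_eq_mul]
    ring

theorem coeff_zero_lineRestriction (f : MvPolynomial σ R) (x w : σ → R) :
    (lineRestriction f x w).coeff 0 = eval x f := by
  simp [Polynomial.coeff_zero_eq_eval_zero, eval_lineRestriction]

variable [Fintype σ]

noncomputable def gradForm (f : MvPolynomial σ R) (x : σ → R) : (σ → R) →ₗ[R] R where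
  toFun w := ∑ i, eval x (pderiv i f) * w i
  map_add' v w := by simp only [Pi.add_apply, mul_add, Finset.sum_add_distrib]
  map_smul' a w := by
    simp only [Pi.smul_apply, smul_eq_mul, Finset.mul_sum, RingHom.id_apply, mul_left_comm]

theorem gradForm_apply (f : MvPolynomial σ R) (x w : σ → R) :
    gradForm f x w = ∑ i, eval x (pderiv i f) * w i := rfl

theorem coeff_one_lineRestriction (f : MvPolynomial σ R) (x w : σ → R) :
    (lineRestriction f x w).coeff 1 = gradForm f x w := by
  induction f using MvPolynomial.induction_on with
  | C a => simp [lineRestriction, gradForm_apply]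
  | add p q hp hq =>
    simp only [lineRestriction, gradForm_apply, map_add, Polynomial.coeff_add, add_mul,
      Finset.sum_add_distrib] at hp hq ⊢
    rw [hp, hq]
  | mul_X p i hp =>
    have hmul : lineRestriction (p * X i) x w = lineRestriction p x w * Polynomial.C (x i) +
        lineRestriction p x w * Polynomial.X * Polynomial.C (w i) := by
      simp only [lineRestriction, map_mul, aeval_X]; ring
    rw [hmul, Polynomial.coeff_add, Polynomial.coeff_mul_C, Polynomial.coeff_mul_C,
      Polynomial.coeff_mul_X, hp, coeff_zero_lineRestriction]
    classical
    simp only [gradForm_apply, Derivation.leibniz, pderiv_X, smul_eq_mul, map_add, map_mul,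
      add_mul, Finset.sum_add_distrib, Finset.sum_mul, eval_X]
    simp [Pi.single_apply, mul_comm, mul_left_comm, add_comm]

end LineRestriction

section InfiniteDomain

variable {R σ : Type*} [CommRing R] [IsDomain R] [Infinite R]

theorem lineRestriction_eq_of_forall_eval {f : MvPolynomial σ R} {x w : σ → R} {p : Polynomial R}
    (h : ∀ t, eval (x + t • w) f = p.eval t) : lineRestriction f x w = p :=
  Polynomial.funext fun t => (eval_lineRestriction f x w t).trans (h t)

variable [Fintype σ]

theorem gradForm_eq_coeff_one_of_forall_eval {f : MvPolynomial σ R} {x w : σ → R} {p : Polynomial R}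
    (h : ∀ t, eval (x + t • w) f = p.eval t) : gradForm f x w = p.coeff 1 := by
  rw [← coeff_one_lineRestriction, lineRestriction_eq_of_forall_eval h]

theorem gradForm_eq_zero_of_eval_eq_mul_pow {f : MvPolynomial σ R} {x w : σ → R} {c : R} {d : ℕ}
    (hd : d ≠ 1) (h : ∀ t, eval (x + t • w) f = c * t ^ d) : gradForm f x w = 0 := by
  rw [gradForm_eq_coeff_one_of_forall_eval (p := Polynomial.C c * Polynomial.X ^ d)
    (by simpa using h), Polynomial.coeff_C_mul_X_pow, if_neg hd.symm]

theorem gradForm_add_eq_of_forall_eval_add_eq {f : MvPolynomial σ R} {z : σ → R}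
    (hz : ∀ y, eval (y + z) f = eval y f) (x : σ → R) : gradForm f (x + z) = gradForm f x := by
  refine LinearMap.ext fun w => ?_
  rw [← coeff_one_lineRestriction f x w]
  exact gradForm_eq_coeff_one_of_forall_eval fun t => by
    rw [add_right_comm, hz, eval_lineRestriction]

theorem gradForm_smul_smul {f : MvPolynomial σ R} {d : ℕ} (hf : f.IsHomogeneous d) (a : R)
    (x w : σ → R) : gradForm f (a • x) (a • w) = a ^ d * gradForm f x w := by
  rw [← coeff_one_lineRestriction f x w, ← Polynomial.coeff_C_mul]
  refine gradForm_eq_coeff_one_of_forall_eval fun t => ?_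
  rw [Polynomial.eval_mul, Polynomial.eval_C, eval_lineRestriction, ← hf.eval_smul_s15, smul_add,
    smul_comm]

end InfiniteDomain

theorem eval_add_eq_of_forall_eval_add_smul_eq_zero {K σ : Type*} [Field K] [IsAlgClosed K]
    {f : MvPolynomial σ K} {z : σ → K}
    (hz : ∀ v, eval v f = 0 → ∀ t : K, eval (v + t • z) f = 0) (x : σ → K) :
    eval (x + z) f = eval x f := by
  by_cases hroot : ∃ t₀ : K, eval (x + t₀ • z) f = 0
  · obtain ⟨t₀, ht₀⟩ := hroot
    have hline (t : K) : eval (x + t • z) f = 0 := by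
      simpa [add_assoc, ← add_smul] using hz _ ht₀ (t - t₀)
    calc eval (x + z) f = 0 := by simpa using hline 1
      _ = eval x f := by simpa using (hline 0).symm
  · have hdeg : (lineRestriction f x z).degree = 0 := by
      by_contra hdeg
      obtain ⟨t, ht⟩ := IsAlgClosed.exists_root _ hdeg
      exact hroot ⟨t, by rwa [Polynomial.IsRoot, eval_lineRestriction] at ht⟩
    have hconst := Polynomial.eq_C_of_degree_eq_zero hdeg
    calc eval (x + z) f = (lineRestriction f x z).eval 1 := by
          rw [eval_lineRestriction, one_smul]
      _ = (lineRestriction f x z).eval 0 := by rw [hconst, Polynomial.eval_C, Polynomial.eval_C]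
      _ = eval x f := by rw [eval_lineRestriction, zero_smul, add_zero]

theorem eval_smul_add_smul_eq_of_eval_add_smul_eq {K σ : Type*} [Field K] [Infinite K]
    [Fintype σ] {f : MvPolynomial σ K} {d : ℕ} (hf : f.IsHomogeneous d) {Q u : σ → K} {c : K}
    (h : ∀ t, eval (Q + t • u) f = c * t ^ d) (s t : K) : eval (s • Q + t • u) f = c * t ^ d := by
  have hline : lineRestriction f (t • u) Q = Polynomial.C (c * t ^ d) := by
    refine Polynomial.eq_of_infinite_eval_eq _ _
      ((Set.finite_singleton 0).infinite_compl.mono fun s (hs : s ≠ 0) => ?_)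
    rw [Set.mem_ofPred_eq, eval_lineRestriction, Polynomial.eval_C,
      show t • u + s • Q = s • (Q + (t / s) • u) by
        rw [smul_add, smul_smul, mul_div_cancel₀ _ hs, add_comm],
      hf.eval_smul_s15, h, div_pow]
    field_simp
  rw [add_comm, ← eval_lineRestriction, hline, Polynomial.eval_C]

section LinearAlgebra

variable {K V : Type*} [Field K] [AddCommGroup V] [Module K V]

theorem exists_dual_le_ker_apply_eq_one {S : Submodule K V} {u : V} (hu : u ∉ S) :
    ∃ ℓ : Dual K V, S ≤ LinearMap.ker ℓ ∧ ℓ u = 1 := by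
  obtain ⟨ℓ, hℓu, hℓS⟩ := S.exists_dual_map_eq_bot_of_notMem hu inferInstance
  refine ⟨(ℓ u)⁻¹ • ℓ, fun v hv => ?_, inv_mul_cancel₀ hℓu⟩
  have hv : ℓ v = 0 := LinearMap.le_ker_iff_map.mpr hℓS hv
  simp [hv]

theorem sup_span_singleton_inf_ker {S : Submodule K V} {ℓ : Dual K V} {u : V}
    (hS : S ≤ LinearMap.ker ℓ) (hu : ℓ u ≠ 0) : (S ⊔ K ∙ u) ⊓ LinearMap.ker ℓ = S := by
  have hu0 : u ≠ 0 := fun h => hu (h ▸ map_zero ℓ)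
  rw [sup_inf_assoc_of_le _ hS, inf_comm,
    ((Submodule.disjoint_span_singleton' hu0).mpr hu).eq_bot, sup_bot_eq]

theorem eq_ker_of_le_ker [FiniteDimensional K V] {W : Submodule K V} {φ : Dual K V}
    (hφ : φ ≠ 0) (hW : W ≤ LinearMap.ker φ) (hdim : finrank K V ≤ finrank K W + 1) :
    W = LinearMap.ker φ :=
  Submodule.eq_of_le_of_finrank_le hW (by have := Dual.finrank_ker_add_one_of_ne_zero hφ; omega)

variable {Q u : V} {L : Submodule K V}

theorem notMem_span_singleton_sup (hQu : LinearIndependent K ![Q, u])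
    (hL : Submodule.span K {Q, u} ⊓ L = ⊥) : u ∉ K ∙ Q ⊔ L := by
  intro h
  obtain ⟨y, hy, z, hz, hsz⟩ := Submodule.mem_sup.mp h
  obtain ⟨s, rfl⟩ := Submodule.mem_span_singleton.mp hy
  have hz0 : z ∈ Submodule.span K {Q, u} ⊓ L :=
    ⟨Submodule.mem_span_pair.mpr ⟨-s, 1, by rw [← hsz]; module⟩, hz⟩
  rw [hL, Submodule.mem_bot] at hz0
  have := (LinearIndependent.pair_iff.mp hQu s (-1) (by rw [← hsz, hz0]; module)).2
  norm_num at this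

theorem finrank_span_pair_sup [FiniteDimensional K V] (hQu : LinearIndependent K ![Q, u])
    (hL : Submodule.span K {Q, u} ⊓ L = ⊥) :
    finrank K ↥(Submodule.span K {Q, u} ⊔ L) = finrank K L + 2 := by
  have hpair : finrank K (Submodule.span K {Q, u}) = 2 := by
    have := finrank_span_eq_card hQu
    rwa [Matrix.range_cons_cons_empty, Fintype.card_fin] at this
  have := Submodule.finrank_sup_add_finrank_inf_eq (Submodule.span K {Q, u}) L
  rw [hL, finrank_bot, hpair] at this
  omega

end LinearAlgebra

section ConeOverPlane

variable {K σ : Type*} [Field K] {f : MvPolynomial σ K} {d : ℕ} {c : K}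

theorem eval_eq_mul_pow_of_mem_span_pair_sup {L : Submodule K (σ → K)} {Q u : σ → K}
    {ℓ : Dual K (σ → K)} (hL : ∀ y, ∀ z ∈ L, eval (y + z) f = eval y f)
    (hplane : ∀ s t : K, eval (s • Q + t • u) f = c * t ^ d) (hℓ : K ∙ Q ⊔ L ≤ LinearMap.ker ℓ)
    (hℓu : ℓ u = 1) {w : σ → K} (hw : w ∈ Submodule.span K {Q, u} ⊔ L) :
    eval w f = c * ℓ w ^ d := by
  obtain ⟨y, hy, z, hz, rfl⟩ := Submodule.mem_sup.mp hw
  obtain ⟨s, t, rfl⟩ := Submodule.mem_span_pair.mp hy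
  have hℓQ : ℓ Q = 0 := hℓ (Submodule.mem_sup_left (Submodule.mem_span_singleton_self Q))
  have hℓz : ℓ z = 0 := hℓ (Submodule.mem_sup_right hz)
  simp [hL _ z hz, hplane, hℓQ, hℓz, hℓu]

theorem gradForm_eq_zero_of_eval_eq_mul_pow_on [Infinite K] [Fintype σ]
    {W : Submodule K (σ → K)} {ℓ : Dual K (σ → K)} (hd : d ≠ 1)
    (hW : ∀ w ∈ W, eval w f = c * ℓ w ^ d) {P w : σ → K} (hP : P ∈ W) (hℓP : ℓ P = 0)
    (hw : w ∈ W) : gradForm f P w = 0 :=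
  gradForm_eq_zero_of_eval_eq_mul_pow hd fun t => by
    rw [hW _ (W.add_mem hP (W.smul_mem t hw)), map_add, map_smul, hℓP, smul_eq_mul, zero_add,
      mul_pow, mul_assoc, mul_comm (t ^ d)]

theorem gradForm_ne_zero_of_mem_span_singleton_sup [Infinite K] [Fintype σ]
    {L : Submodule K (σ → K)} {Q P : σ → K} (hf : f.IsHomogeneous d)
    (hL : ∀ y, ∀ z ∈ L, eval (y + z) f = eval y f) (hQ : gradForm f Q ≠ 0)
    (hP : P ∈ K ∙ Q ⊔ L) (hPL : P ∉ L) : gradForm f P ≠ 0 := by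
  obtain ⟨y, hy, z, hz, rfl⟩ := Submodule.mem_sup.mp hP
  obtain ⟨a, rfl⟩ := Submodule.mem_span_singleton.mp hy
  have ha : a ≠ 0 := by rintro rfl; exact hPL (by simpa using hz)
  intro h0
  refine hQ (LinearMap.ext fun w => ?_)
  have := gradForm_smul_smul hf a Q w
  rw [← gradForm_add_eq_of_forall_eval_add_eq (hL · z hz), h0] at this
  simpa [ha] using this.symm

end ConeOverPlane

theorem stmt_15_general (N d : ℕ) (hd : 3 ≤ d)
    (f : MvPolynomial (Fin (N + 1)) ℂ) (hf : f.IsHomogeneous d)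
    (V L : Submodule ℂ (Fin (N + 1) → ℂ))
    (hL : finrank ℂ L = N - 2) (hVL : V ⊓ L = ⊥)
    (hcone : ∀ v : Fin (N + 1) → ℂ, eval v f = 0 →
      ∀ w ∈ L, ∀ s t : ℂ, eval (s • v + t • w) f = 0)
    (Q u : Fin (N + 1) → ℂ) (hQV : Q ∈ V) (huV : u ∈ V)
    (hQu : LinearIndependent ℂ ![Q, u])
    (hQsm : ∃ w ∈ V, ∑ i, eval Q (pderiv i f) * w i ≠ 0)
    (c : ℂ) (hc : c ≠ 0) (hti : ∀ t : ℂ, eval (Q + t • u) f = c * t ^ d) :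
    ∀ P : Fin (N + 1) → ℂ, P ∈ Submodule.span ℂ {Q} ⊔ L → P ∉ L →
      eval P f = 0 ∧
      (∃ i, eval P (pderiv i f) ≠ 0) ∧
      (∀ w : Fin (N + 1) → ℂ,
        (∑ i, eval P (pderiv i f) * w i = 0) ↔ w ∈ Submodule.span ℂ {Q, u} ⊔ L) ∧
      (∃ (ℓ : (Fin (N + 1) → ℂ) →ₗ[ℂ] ℂ) (c' : ℂ), c' ≠ 0 ∧
        Submodule.span ℂ {Q} ⊔ L = (Submodule.span ℂ {Q, u} ⊔ L) ⊓ LinearMap.ker ℓ ∧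
        ∀ w ∈ Submodule.span ℂ {Q, u} ⊔ L, eval w f = c' * (ℓ w) ^ d) := by
  intro P hP hPL
  have hT (y : Fin (N + 1) → ℂ) (z) (hz : z ∈ L) : eval (y + z) f = eval y f :=
    eval_add_eq_of_forall_eval_add_smul_eq_zero
      (fun v hv t => by simpa using hcone v hv z hz 1 t) y
  have hQuL : Submodule.span ℂ {Q, u} ⊓ L = ⊥ := by
    rw [← le_bot_iff, ← hVL]
    exact inf_le_inf_right L (Submodule.span_le.mpr (Set.insert_subset hQV (by simpa using huV)))
  obtain ⟨ℓ, hℓ, hℓu⟩ := exists_dual_le_ker_apply_eq_one (notMem_span_singleton_sup hQu hQuL)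
  have hfW (w) (hw : w ∈ Submodule.span ℂ {Q, u} ⊔ L) : eval w f = c * ℓ w ^ d :=
    eval_eq_mul_pow_of_mem_span_pair_sup hT (eval_smul_add_smul_eq_of_eval_add_smul_eq hf hti)
      hℓ hℓu hw
  have hPW : P ∈ Submodule.span ℂ {Q, u} ⊔ L :=
    sup_le_sup_right (Submodule.span_mono (by simp)) L hP
  have hℓP : ℓ P = 0 := hℓ hP
  have hGW : Submodule.span ℂ {Q, u} ⊔ L ≤ LinearMap.ker (gradForm f P) := fun w hw =>
    gradForm_eq_zero_of_eval_eq_mul_pow_on (by omega) hfW hPW hℓP hw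
  obtain ⟨w, -, hw⟩ := hQsm
  have hG : gradForm f P ≠ 0 := gradForm_ne_zero_of_mem_span_singleton_sup hf hT
    (fun h => hw (by simpa [gradForm_apply] using LinearMap.congr_fun h w)) hP hPL
  have hker := eq_ker_of_le_ker hG hGW
    (by rw [finrank_span_pair_sup hQu hQuL, hL, Module.finrank_fin_fun]; omega)
  refine ⟨by rw [hfW P hPW, hℓP, zero_pow (by omega), mul_zero], ?_, fun w => ?_,
    ℓ, c, hc, ?_, hfW⟩
  · by_contra! h
    exact hG (LinearMap.ext fun w => by simp [gradForm_apply, h])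
  · rw [hker]; rfl
  · rw [Submodule.span_insert, sup_right_comm, sup_span_singleton_inf_ker hℓ (by simp [hℓu])]

/-- Let `X = {f = 0} ⊂ ℙ^N` be the irreducible cone of degree `d ≥ 3` with vertex the
`(N-3)`-dimensional linear space `L` over an irreducible plane curve `Γ = X ∩ V`, where `V`
is a plane with `L ∩ V = ∅`.  If `Q` is a total inflection point of `Γ` with tangent
direction `u` (so `f` restricted to the line `⟨Q,u⟩` is `c·t^d`, `c ≠ 0`), then every point
`P ∈ ⟨Q,L⟩ \ L` lies on `X`, is a smooth point of `X`, has tangent hyperplane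
`T_P(X) = ⟨T,L⟩ = span{Q,u} ⊔ L`, and `T_P(X) ∩ X = d·⟨Q,L⟩` as divisors; in particular
`P` is a star point of `X`. -/
theorem stmt_15 (N d : ℕ) (hN : 3 ≤ N) (hd : 3 ≤ d)
    (f : MvPolynomial (Fin (N + 1)) ℂ) (hf : f.IsHomogeneous d) (hirr : Irreducible f)
    (V L : Submodule ℂ (Fin (N + 1) → ℂ))
    (hV : finrank ℂ V = 3) (hL : finrank ℂ L = N - 2) (hVL : V ⊓ L = ⊥)
    (hcone : ∀ v : Fin (N + 1) → ℂ, eval v f = 0 →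
      ∀ w ∈ L, ∀ s t : ℂ, eval (s • v + t • w) f = 0)
    (Q u : Fin (N + 1) → ℂ) (hQV : Q ∈ V) (huV : u ∈ V)
    (hQu : LinearIndependent ℂ ![Q, u])
    (hQsm : ∃ w ∈ V, ∑ i, eval Q (pderiv i f) * w i ≠ 0)
    (c : ℂ) (hc : c ≠ 0) (hti : ∀ t : ℂ, eval (Q + t • u) f = c * t ^ d) :
    ∀ P : Fin (N + 1) → ℂ, P ∈ Submodule.span ℂ {Q} ⊔ L → P ∉ L →
      eval P f = 0 ∧
      (∃ i, eval P (pderiv i f) ≠ 0) ∧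
      (∀ w : Fin (N + 1) → ℂ,
        (∑ i, eval P (pderiv i f) * w i = 0) ↔ w ∈ Submodule.span ℂ {Q, u} ⊔ L) ∧
      (∃ (ℓ : (Fin (N + 1) → ℂ) →ₗ[ℂ] ℂ) (c' : ℂ), c' ≠ 0 ∧
        Submodule.span ℂ {Q} ⊔ L = (Submodule.span ℂ {Q, u} ⊔ L) ⊓ LinearMap.ker ℓ ∧
        ∀ w ∈ Submodule.span ℂ {Q, u} ⊔ L, eval w f = c' * (ℓ w) ^ d) :=
  stmt_15_general N d hd f hf V L hL hVL hcone Q u hQV huV hQu hQsm c hc hti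
end

section
/- Let Λ₁, ..., Λ_d be d distinct (N−2)-dimensional linear subspaces of ℙ^N all containing a common (N−3)-dimensional linear subspace L, and suppose X ⊂ ℙ^N is an irreducible hypersurface of degree d such that for each i there is a hyperplane Πᵢ with Πᵢ ∩ X = d·Λᵢ as divisors on Πᵢ. Then X is a cone with vertex L over a plane curve of degree d. -/
/-
For `w ∈ L`, the form `f` is invariant under translation by `w` on each hyperplane `Πᵢ`, since
there `f = cᵢ ℓᵢ ^ d` and `ℓᵢ w = 0`. For `x` off all the `Πᵢ` and a generic `u`, the degree `≤ d`
polynomial `τ ↦ f (u + τ (x + w)) - f (u + τ x)` vanishes at `τ = 0` and at the `d` distinct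
parameters where `τ ↦ u + τ x` meets the `Πᵢ`, hence identically. Homogeneity of `f` transfers this
to the lines `σ ↦ x + σ u` and `σ ↦ x + w + σ u`, and `σ = 0` gives `f (x + w) = f x`. So `f` is
invariant under `L`, and `f (s v + t w) = f (s v) = s ^ d f v`.
-/

open MvPolynomial Module

theorem Module.Dual.exists_forall_apply_ne_zero {K V ι : Type*} [Field K] [Infinite K]
    [AddCommGroup V] [Module K V] [Finite ι] {φ : ι → Module.Dual K V} (hφ : ∀ i, φ i ≠ 0) :
    ∃ v, ∀ i, φ i v ≠ 0 := by
  have := Fintype.ofFinite ι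
  obtain ⟨v, -, hv⟩ := Set.exists_of_ssubset
    (Submodule.iUnion_ssubset_of_forall_ne_top_of_card_lt Finset.univ
      (fun i => LinearMap.ker (φ i)) (fun i => by simpa [LinearMap.ker_eq_top] using hφ i)
      (by simp [ENat.card_eq_top_of_infinite]))
  exact ⟨v, by simpa using hv⟩

theorem Submodule.exists_dual_ker_eq {K V : Type*} [Field K] [AddCommGroup V] [Module K V]
    [FiniteDimensional K V] (p : Submodule K V) (hp : finrank K p + 1 = finrank K V) :
    ∃ φ : Module.Dual K V, φ ≠ 0 ∧ LinearMap.ker φ = p := by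
  obtain ⟨φ, hφ, hle⟩ :=
    p.exists_le_ker_of_lt_top (Submodule.lt_top_of_finrank_lt_finrank (by omega))
  refine ⟨φ, hφ, (Submodule.eq_of_le_of_finrank_eq hle ?_).symm⟩
  have := Module.Dual.finrank_ker_add_one_of_ne_zero hφ
  omega

namespace MvPolynomial

variable {σ K : Type*}

section CommSemiring

variable [CommSemiring K]

theorem natDegree_aeval_le_totalDegree (f : MvPolynomial σ K) {g : σ → Polynomial K}
    (hg : ∀ i, (g i).natDegree ≤ 1) : (aeval g f).natDegree ≤ f.totalDegree := by
  rw [aeval_def, eval₂_eq]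
  refine Polynomial.natDegree_sum_le_of_forall_le _ _ fun m hm => ?_
  calc _ ≤ (∏ i ∈ m.support, g i ^ m i).natDegree := Polynomial.natDegree_C_mul_le _ _
    _ ≤ ∑ i ∈ m.support, (g i ^ m i).natDegree := Polynomial.natDegree_prod_le _ _
    _ ≤ ∑ i ∈ m.support, m i :=
      Finset.sum_le_sum fun i _ => (Polynomial.natDegree_pow_le_of_le _ (hg i)).trans_eq (mul_one _)
    _ ≤ f.totalDegree := le_totalDegree hm

noncomputable def restrictLine (f : MvPolynomial σ K) (a b : σ → K) : Polynomial K :=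
  aeval (fun i => Polynomial.C (b i) * Polynomial.X + Polynomial.C (a i)) f

theorem eval_restrictLine (f : MvPolynomial σ K) (a b : σ → K) (t : K) :
    (f.restrictLine a b).eval t = eval (a + t • b) f := by
  rw [restrictLine, ← Polynomial.coe_aeval_eq_eval, ← AlgHom.comp_apply, comp_aeval,
    aeval_eq_eval]
  congr 2
  funext i
  simp only [map_add, map_mul, Polynomial.aeval_C, Polynomial.aeval_X, Pi.add_apply, Pi.smul_apply,
    smul_eq_mul, Algebra.algebraMap_self, RingHom.id_apply]
  ring

theorem natDegree_restrictLine_le (f : MvPolynomial σ K) (a b : σ → K) :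
    (f.restrictLine a b).natDegree ≤ f.totalDegree :=
  f.natDegree_aeval_le_totalDegree fun _ => Polynomial.natDegree_linear_le

theorem IsHomogeneous.eval_smul_s19 {f : MvPolynomial σ K} {n : ℕ} (hf : f.IsHomogeneous n)
    (s : K) (v : σ → K) : eval (s • v) f = s ^ n * eval v f := by
  simp only [eval_eq, Finset.mul_sum, Pi.smul_apply, smul_eq_mul, mul_pow,
    Finset.prod_mul_distrib, Finset.prod_pow_eq_pow_sum]
  refine Finset.sum_congr rfl fun m hm => ?_
  rw [← hf.degree_eq_sum_deg_support hm]
  ring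

end CommSemiring

variable [Field K] [Infinite K]

theorem IsHomogeneous.eval_eq_of_eval_add_smul_eq {f : MvPolynomial σ K} {n : ℕ}
    (hf : f.IsHomogeneous n) {p q u : σ → K} (s : Finset K) (hs : n < s.card)
    (h : ∀ τ ∈ s, eval (u + τ • p) f = eval (u + τ • q) f) : eval p f = eval q f := by
  have hline : f.restrictLine u p = f.restrictLine u q := by
    rw [← sub_eq_zero]
    refine Polynomial.eq_zero_of_natDegree_lt_card_of_eval_eq_zero' _ s
      (fun τ hτ => by simp [eval_restrictLine, h τ hτ]) ?_
    calc _ ≤ max (f.restrictLine u p).natDegree (f.restrictLine u q).natDegree :=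
          Polynomial.natDegree_sub_le _ _
      _ ≤ n := max_le ((natDegree_restrictLine_le _ _ _).trans hf.totalDegree_le)
          ((natDegree_restrictLine_le _ _ _).trans hf.totalDegree_le)
      _ < s.card := hs
  -- by homogeneity, `f (r + τ • u) = τ ^ n * f (u + τ⁻¹ • r)` for `τ ≠ 0`
  have hline' : f.restrictLine p u = f.restrictLine q u := by
    refine Polynomial.eq_of_infinite_eval_eq _ _
      ((Set.finite_singleton 0).infinite_compl.mono fun τ (hτ : τ ≠ 0) => ?_)
    have hscale (r : σ → K) : r + τ • u = τ • (u + τ⁻¹ • r) := by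
      rw [smul_add, smul_smul, mul_inv_cancel₀ hτ, one_smul, add_comm]
    change Polynomial.eval τ _ = Polynomial.eval τ _
    rw [eval_restrictLine, eval_restrictLine, hscale p, hscale q, hf.eval_smul_s19, hf.eval_smul_s19,
      ← eval_restrictLine, ← eval_restrictLine, hline]
  simpa [eval_restrictLine] using congrArg (Polynomial.eval 0) hline'

theorem IsHomogeneous.eval_add_eq_of_forall_mem_ker {ι : Type*} [Fintype ι]
    {f : MvPolynomial σ K} {n : ℕ} (hf : f.IsHomogeneous n) (hn : n ≤ Fintype.card ι)
    {φ : ι → Module.Dual K (σ → K)} (hφ : ∀ i, φ i ≠ 0)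
    (hker : Function.Injective fun i => LinearMap.ker (φ i)) {W : Submodule K (σ → K)}
    (hW : ∀ i, ∀ x ∈ LinearMap.ker (φ i), ∀ w ∈ W, eval (x + w) f = eval x f)
    (x : σ → K) {w : σ → K} (hw : w ∈ W) : eval (x + w) f = eval x f := by
  classical
  by_cases hx : ∃ i, φ i x = 0
  · obtain ⟨i, hi⟩ := hx
    exact hW i x hi w hw
  push Not at hx
  -- `ψ i j u ≠ 0` says that the line `τ ↦ u + τ • x` meets `ker (φ i)` and `ker (φ j)` at
  -- different parameters
  set ψ : ι → ι → Module.Dual K (σ → K) := fun i j => φ i x • φ j - φ j x • φ i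
  have hψ {i j : ι} (hij : i ≠ j) : ψ i j ≠ 0 := fun h => hij <| hker <| by
    change LinearMap.ker (φ i) = LinearMap.ker (φ j)
    rw [← LinearMap.ker_smul (φ i) _ (hx j), ← sub_eq_zero.mp h, LinearMap.ker_smul _ _ (hx i)]
  obtain ⟨u, hu⟩ := Module.Dual.exists_forall_apply_ne_zero
    (φ := Sum.elim φ fun ij : {ij : ι × ι // ij.1 ≠ ij.2} => ψ ij.1.1 ij.1.2)
    (by rintro (i | ⟨⟨i, j⟩, hij⟩); exacts [hφ i, hψ hij])
  set τ : ι → K := fun i => -φ i u / φ i x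
  have hτ_mem (i : ι) : u + τ i • x ∈ LinearMap.ker (φ i) := by
    simp [τ, div_mul_cancel₀ _ (hx i)]
  have hτ_ne (i : ι) : τ i ≠ 0 := div_ne_zero (neg_ne_zero.mpr (hu (.inl i))) (hx i)
  have hτ_inj : Function.Injective τ := fun i j hij => by
    by_contra hne
    apply hu (.inr ⟨(i, j), hne⟩)
    simp only [τ, div_eq_div_iff (hx i) (hx j)] at hij
    simp only [Sum.elim_inr, ψ, LinearMap.sub_apply, LinearMap.smul_apply, smul_eq_mul]
    linear_combination hij
  refine hf.eval_eq_of_eval_add_smul_eq (u := u) (insert 0 (Finset.univ.image τ)) ?_ ?_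
  · rw [Finset.card_insert_of_notMem (by simpa using hτ_ne),
      Finset.card_image_of_injective _ hτ_inj, Finset.card_univ]
    omega
  · simp only [Finset.mem_insert, Finset.mem_image, Finset.mem_univ, true_and]
    rintro t (rfl | ⟨i, rfl⟩)
    · simp
    · rw [smul_add, ← add_assoc]
      exact hW i _ (hτ_mem i) _ (W.smul_mem _ hw)

end MvPolynomial

section DivisorCond

variable {N d : ℕ} {f : MvPolynomial (Fin (N + 1)) ℂ} {Λ Λ' Pl : Submodule ℂ (Fin (N + 1) → ℂ)}

theorem DivisorCond.eval_add_eq (h : DivisorCond N d f Λ Pl) {x w : Fin (N + 1) → ℂ} (hx : x ∈ Pl)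
    (hw : w ∈ Λ) : eval (x + w) f = eval x f := by
  obtain ⟨ℓ, c, -, rfl, hf⟩ := h
  obtain ⟨hwPl, hwℓ⟩ := Submodule.mem_inf.mp hw
  rw [hf _ (Pl.add_mem hx hwPl), hf _ hx, map_add, LinearMap.mem_ker.mp hwℓ, add_zero]

theorem DivisorCond.unique (hd : d ≠ 0) (h : DivisorCond N d f Λ Pl)
    (h' : DivisorCond N d f Λ' Pl) : Λ = Λ' := by
  obtain ⟨ℓ, c, hc, rfl, hf⟩ := h
  obtain ⟨ℓ', c', hc', rfl, hf'⟩ := h'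
  ext x
  simp only [Submodule.mem_inf, LinearMap.mem_ker, and_congr_right_iff]
  intro hx
  calc ℓ x = 0 ↔ c * ℓ x ^ d = 0 := by simp [hc, hd]
    _ ↔ c' * ℓ' x ^ d = 0 := by rw [← hf x hx, hf' x hx]
    _ ↔ ℓ' x = 0 := by simp [hc', hd]

theorem stmt_19_general (N d : ℕ)
    (f : MvPolynomial (Fin (N + 1)) ℂ) (hf : f.IsHomogeneous d)
    (L : Submodule ℂ (Fin (N + 1) → ℂ))
    (Λ : Fin d → Submodule ℂ (Fin (N + 1) → ℂ)) (hΛinj : Function.Injective Λ)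
    (hLΛ : ∀ i, L ≤ Λ i)
    (Pl : Fin d → Submodule ℂ (Fin (N + 1) → ℂ))
    (hPlrk : ∀ i, finrank ℂ (Pl i) = N)
    (hdiv : ∀ i, DivisorCond N d f (Λ i) (Pl i)) :
    ∀ v : Fin (N + 1) → ℂ, eval v f = 0 →
      ∀ w ∈ L, ∀ s t : ℂ, eval (s • v + t • w) f = 0 := by
  have hPl_inj : Function.Injective Pl := fun i j h =>
    hΛinj <| (hdiv i).unique i.pos.ne' (h ▸ hdiv j)
  choose φ hφ hker using fun i => (Pl i).exists_dual_ker_eq (by simp [hPlrk i])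
  have htranslate : ∀ x, ∀ w ∈ L, eval (x + w) f = eval x f :=
    fun x w hw => hf.eval_add_eq_of_forall_mem_ker (by simp) hφ
      (by simpa only [hker] using hPl_inj)
      (fun i x hx w hw => (hdiv i).eval_add_eq (hker i ▸ hx) (hLΛ i hw)) x hw
  intro v hv w hw s t
  rw [htranslate _ _ (L.smul_mem t hw), hf.eval_smul_s19, hv, mul_zero]

/-- Let `Λ₁, …, Λ_d` be `d` distinct `(N-2)`-dimensional linear subspaces of `ℙ^N` containing
a common `(N-3)`-dimensional linear subspace `L`, and let `X ⊂ ℙ^N` be an irreducible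
hypersurface of degree `d` such that for each `i` some hyperplane `Πᵢ` satisfies
`Πᵢ ∩ X = d·Λᵢ` as divisors.  Then `X` is a cone with vertex `L` (over a plane curve of
degree `d`): for every `P ∈ L` and every `Q ∈ X`, the line `⟨P,Q⟩` lies in `X`. -/
theorem stmt_19 (N d : ℕ) (hN : 3 ≤ N) (hd : 3 ≤ d)
    (f : MvPolynomial (Fin (N + 1)) ℂ) (hf : f.IsHomogeneous d) (hirr : Irreducible f)
    (L : Submodule ℂ (Fin (N + 1) → ℂ)) (hL : finrank ℂ L = N - 2)
    (Λ : Fin d → Submodule ℂ (Fin (N + 1) → ℂ)) (hΛinj : Function.Injective Λ)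
    (hΛrk : ∀ i, finrank ℂ (Λ i) = N - 1) (hLΛ : ∀ i, L ≤ Λ i)
    (Pl : Fin d → Submodule ℂ (Fin (N + 1) → ℂ))
    (hPlrk : ∀ i, finrank ℂ (Pl i) = N) (hΛPl : ∀ i, Λ i ≤ Pl i)
    (hdiv : ∀ i, DivisorCond N d f (Λ i) (Pl i)) :
    ∀ v : Fin (N + 1) → ℂ, eval v f = 0 →
      ∀ w ∈ L, ∀ s t : ℂ, eval (s • v + t • w) f = 0 :=
  stmt_19_general N d f hf L Λ hΛinj hLΛ Pl hPlrk hdiv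
end DivisorCond
end
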